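/- Let n ≥ 1, let p : ℝ → ℝ be a smooth 2nπ-periodic function with ρ_p(θ) = p(θ) + p''(θ) > 0 for all θ, and let k be an odd positive integer. Then the length of the branch θ ↦ γ_p(θ) − γ_p(θ + kπ) of the secant caustic over one period equals twice the length of the rosette: ∫₀^{2nπ} ‖d/dθ (γ_p(θ) − γ_p(θ + kπ))‖ dθ = 2 ∫₀^{2nπ} ‖γ_p'(θ)‖ dθ. -/

import Mathlib

open Real

/-- The hedgehog (support-function) parametrization associated with `p`. -/
noncomputable def hedgehog (p : ℝ → ℝ) (θ : ℝ) : ℝ × ℝ :=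
  (p θ * Real.cos θ - deriv p θ * Real.sin θ, p θ * Real.sin θ + deriv p θ * Real.cos θ)

/-- The Euclidean norm on `ℝ × ℝ`. -/
noncomputable def norm2 (v : ℝ × ℝ) : ℝ := Real.sqrt (v.1 ^ 2 + v.2 ^ 2)

lemma hedgehog_hasDerivAt (p : ℝ → ℝ) (hp : ContDiff ℝ (⊤ : ℕ∞) p) (θ : ℝ) :
    HasDerivAt (hedgehog p)
      (-( (p θ + deriv (deriv p) θ) * Real.sin θ), (p θ + deriv (deriv p) θ) * Real.cos θ) θ := by
  have hp' := (contDiff_infty_iff_deriv.mp (hp.of_le (by simp))).2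
  have h1 : HasDerivAt p (deriv p θ) θ := (hp.differentiable (by simp) θ).hasDerivAt
  have h2 : HasDerivAt (deriv p) (deriv (deriv p) θ) θ :=
    (hp'.differentiable (by simp) θ).hasDerivAt
  have hs : HasDerivAt Real.sin (Real.cos θ) θ := Real.hasDerivAt_sin θ
  have hc : HasDerivAt Real.cos (-Real.sin θ) θ := Real.hasDerivAt_cos θ
  have hA := ((h1.fun_mul hc).fun_sub (h2.fun_mul hs)).prodMk ((h1.fun_mul hs).fun_add (h2.fun_mul hc))
  exact hA.congr_deriv (by ext <;> simp <;> ring)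

lemma periodic_deriv_of_periodic {p : ℝ → ℝ} {T : ℝ} (hp : Differentiable ℝ p)
    (hper : Function.Periodic p T) : Function.Periodic (deriv p) T := by
  intro θ
  have h : HasDerivAt (fun x => p (x + T)) (deriv p (θ + T)) θ :=
    HasDerivAt.comp_add_const θ T (hp (θ + T)).hasDerivAt
  have he : (fun x => p (x + T)) = p := funext fun x => hper x
  rw [he] at h
  exact h.deriv.symm

/-- For `k` odd, the length of the `k`-th branch of the secant caustic of an
`n`-rosette equals twice the length of the rosette. -/
theorem secant_caustic_branch_odd_length
    (n : ℕ) (hn : 1 ≤ n) (p : ℝ → ℝ) (hp : ContDiff ℝ (⊤ : ℕ∞) p)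
    (hper : Function.Periodic p (2 * n * π))
    (ρ : ℝ → ℝ) (hρ : ∀ θ, ρ θ = p θ + deriv (deriv p) θ)
    (hpos : ∀ θ, 0 < ρ θ)
    (k : ℕ) (hk : 0 < k) (hodd : Odd k) :
    (∫ θ in (0 : ℝ)..(2 * n * π),
        norm2 (deriv (fun θ => hedgehog p θ - hedgehog p (θ + k * π)) θ)) =
      2 * ∫ θ in (0 : ℝ)..(2 * n * π), norm2 (deriv (hedgehog p) θ) := by
  have hp' := (contDiff_infty_iff_deriv.mp (hp.of_le (by simp))).2
  have hp'' := (contDiff_infty_iff_deriv.mp (hp'.of_le le_rfl)).2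
  -- trig identities for odd k
  obtain ⟨m, hm⟩ := hodd
  have hsin : ∀ θ : ℝ, Real.sin (θ + k * π) = -Real.sin θ := by
    intro θ
    have : (θ : ℝ) + k * π = (θ + π) + (m:ℤ) * (2 * π) := by
      push_cast [hm]; ring
    rw [this, Real.sin_add_int_mul_two_pi, Real.sin_add_pi]
  have hcos : ∀ θ : ℝ, Real.cos (θ + k * π) = -Real.cos θ := by
    intro θ
    have : (θ : ℝ) + k * π = (θ + π) + (m:ℤ) * (2 * π) := by
      push_cast [hm]; ring
    rw [this, Real.cos_add_int_mul_two_pi, Real.cos_add_pi]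
  -- RHS integrand
  have hR : ∀ θ : ℝ, norm2 (deriv (hedgehog p) θ) = ρ θ := by
    intro θ
    rw [(hedgehog_hasDerivAt p hp θ).deriv]
    have : (-((p θ + deriv (deriv p) θ) * Real.sin θ)) ^ 2
        + ((p θ + deriv (deriv p) θ) * Real.cos θ) ^ 2 = (ρ θ) ^ 2 := by
      have := Real.sin_sq_add_cos_sq θ
      rw [hρ θ]; nlinarith [Real.sin_sq_add_cos_sq θ]
    simp only [norm2, this]
    exact Real.sqrt_sq (hpos θ).le
  -- LHS integrand
  have hL : ∀ θ : ℝ,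
      norm2 (deriv (fun θ => hedgehog p θ - hedgehog p (θ + k * π)) θ)
        = ρ θ + ρ (θ + k * π) := by
    intro θ
    have hA := hedgehog_hasDerivAt p hp θ
    have hB : HasDerivAt (fun θ => hedgehog p (θ + k * π))
        (-((p (θ + k * π) + deriv (deriv p) (θ + k * π)) * Real.sin (θ + k * π)),
          (p (θ + k * π) + deriv (deriv p) (θ + k * π)) * Real.cos (θ + k * π)) θ :=
      HasDerivAt.comp_add_const θ _ (hedgehog_hasDerivAt p hp (θ + k * π))
    have hAB := hA.sub hB
    rw [show (fun θ => hedgehog p θ - hedgehog p (θ + k * π)) = (hedgehog p - fun θ => hedgehog p (θ + k * π)) from rfl, hAB.deriv]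
    have h1 : (-((p θ + deriv (deriv p) θ) * Real.sin θ),
          (p θ + deriv (deriv p) θ) * Real.cos θ)
        - (-((p (θ + k * π) + deriv (deriv p) (θ + k * π)) * Real.sin (θ + k * π)),
          (p (θ + k * π) + deriv (deriv p) (θ + k * π)) * Real.cos (θ + k * π))
        = (-((ρ θ + ρ (θ + k * π)) * Real.sin θ), (ρ θ + ρ (θ + k * π)) * Real.cos θ) := by
      rw [Prod.mk_sub_mk, hsin θ, hcos θ, hρ θ, hρ (θ + k * π)]
      simp only [Prod.mk.injEq]
      constructor <;> ring
    rw [h1]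
    have h2 : (-((ρ θ + ρ (θ + k * π)) * Real.sin θ)) ^ 2
        + ((ρ θ + ρ (θ + k * π)) * Real.cos θ) ^ 2 = (ρ θ + ρ (θ + k * π)) ^ 2 := by
      nlinarith [Real.sin_sq_add_cos_sq θ]
    simp only [norm2, h2]
    exact Real.sqrt_sq (by have := hpos θ; have := hpos (θ + k * π); linarith)
  -- ρ is continuous and periodic
  have hρeq : ρ = fun θ => p θ + deriv (deriv p) θ := funext hρ
  have hρcont : Continuous ρ := by
    rw [hρeq]
    exact (hp.continuous).add (hp''.continuous)
  have hρper : Function.Periodic ρ (2 * n * π) := by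
    rw [hρeq]
    exact hper.add (periodic_deriv_of_periodic (hp'.differentiable (by simp))
      (periodic_deriv_of_periodic (hp.differentiable (by simp)) hper))
  -- rewrite integrals
  simp only [hL, hR]
  have hint1 : IntervalIntegrable ρ MeasureTheory.volume 0 (2 * n * π) :=
    hρcont.intervalIntegrable _ _
  have hint2 : IntervalIntegrable (fun θ => ρ (θ + k * π)) MeasureTheory.volume 0 (2 * n * π) :=
    (hρcont.comp (by continuity)).intervalIntegrable _ _
  rw [intervalIntegral.integral_add hint1 hint2]
  have hshift : (∫ θ in (0:ℝ)..(2 * n * π), ρ (θ + k * π))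
      = ∫ θ in (0:ℝ)..(2 * n * π), ρ θ := by
    rw [intervalIntegral.integral_comp_add_right]
    have := hρper.intervalIntegral_add_eq (k * π) 0
    simpa [add_comm] using this
  rw [hshift]
  ring
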